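/- Let $|q|<1$, $p \geq 1$ an integer, and for $n \geq 0$ define $S_n = \sum_{k=-n-1}^{n} \frac{(-1)^k q^{(p+1/2)k^2+(p-1/2)k}}{(q;q)_{n-k}(q;q)_{n+k+1}}$ and $T_n = \sum_{k=-n}^{n} \frac{(-1)^k q^{(p+1/2)k^2+(p+1/2)k}}{(q;q)_{n-k}(q;q)_{n+k}}$. Then $q^n S_n = T_n$. -/

import Mathlib

/-!
Let `D k = (q;q)_{n-k} (q;q)_{n+k+1}`, which is invariant under the reflection `k ↦ -k-1` of
`[-n-1, n]`, and let `a` be the exponent of the first sum, so `a (-k-1) = a k + 2k + 1`. The terms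
`u k = q^n (-1)^k q^(a k) / D k` of `q^n S_n` and `v k = (-1)^k q^(a k + k) / D k` satisfy
`v (-k-1) = -v k`, so `q^n S_n = ∑ u (-k-1) = ∑ (v k + u (-k-1))`. The new summand vanishes at
`k = -n-1`, and for `-n ≤ k ≤ n` it equals `(-1)^k q^(a k + k) (1 - q^(n+k+1)) / D k`, which
is the `k`-th term of `T_n` because `D k = (q;q)_{n-k} (q;q)_{n+k} (1 - q^(n+k+1))`.
-/

/-- The q-Pochhammer symbol `(q; q)_n`. -/
def qPoch (q : ℂ) (n : ℕ) : ℂ := ∏ j ∈ Finset.range n, (1 - q ^ (j + 1))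

open Finset

lemma zpow_add_of_nonneg {G₀ : Type*} [GroupWithZero G₀] (a : G₀) {m n : ℤ} (hm : 0 ≤ m)
    (hn : 0 ≤ n) : a ^ (m + n) = a ^ m * a ^ n := by
  lift m to ℕ using hm
  lift n to ℕ using hn
  rw [← Nat.cast_add, zpow_natCast, zpow_natCast, zpow_natCast, pow_add]

lemma neg_one_zpow_neg_sub_one {R : Type*} [DivisionRing R] (k : ℤ) :
    (-1 : R) ^ (-k - 1) = -(-1) ^ k := by
  rw [zpow_sub₀ (by norm_num), zpow_neg, ← inv_zpow, inv_neg_one, zpow_one, div_neg, div_one]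

section Reflection

variable (n : ℤ)

lemma sum_Icc_neg_sub_one {M : Type*} [AddCommMonoid M] (f : ℤ → M) :
    ∑ k ∈ Icc (-n - 1) n, f (-k - 1) = ∑ k ∈ Icc (-n - 1) n, f k :=
  sum_nbij' (fun k ↦ -k - 1) (fun k ↦ -k - 1) (by intro k; simp only [mem_Icc]; omega)
    (by intro k; simp only [mem_Icc]; omega) (by intro k _; ring) (by intro k _; ring)
    (by intro k _; rfl)

lemma sum_Icc_eq_zero_of_neg_sub_one {M : Type*} [AddCommGroup M] (f : ℤ → M)
    (hf : ∀ k, f (-k - 1) = -f k) : ∑ k ∈ Icc (-n - 1) n, f k = 0 :=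
  sum_involution (fun k _ ↦ -k - 1) (fun k _ ↦ by rw [hf, add_neg_cancel])
    (fun k _ _ ↦ by omega) (fun k hk ↦ by simp only [mem_Icc] at hk ⊢; omega)
    (fun k _ ↦ by ring)

end Reflection

lemma qPoch_succ (q : ℂ) (m : ℕ) : qPoch q (m + 1) = qPoch q m * (1 - q ^ (m + 1)) :=
  prod_range_succ _ _

lemma qPoch_ne_zero {q : ℂ} (hq : ‖q‖ < 1) (m : ℕ) : qPoch q m ≠ 0 :=
  prod_ne_zero_iff.mpr fun j _ ↦ sub_ne_zero.mpr fun h ↦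
    (pow_lt_one₀ (norm_nonneg q) hq j.succ_ne_zero).ne (by rw [← norm_pow, ← h, norm_one])

theorem q_pow_mul_sum_eq_sum {q : ℂ} (hP : ∀ m, qPoch q m ≠ 0) {a : ℤ → ℤ}
    (ha_refl : ∀ k, a (-k - 1) = a k + 2 * k + 1) (ha : ∀ k, 0 ≤ a k)
    (hak : ∀ k, 0 ≤ a k + k) (n : ℕ) :
    q ^ n * ∑ k ∈ Icc (-(n : ℤ) - 1) n,
        (-1 : ℂ) ^ k * q ^ a k /
          (qPoch q ((n : ℤ) - k).toNat * qPoch q ((n : ℤ) + k + 1).toNat) =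
      ∑ k ∈ Icc (-(n : ℤ)) n,
        (-1 : ℂ) ^ k * q ^ (a k + k) /
          (qPoch q ((n : ℤ) - k).toNat * qPoch q ((n : ℤ) + k).toNat) := by
  set D : ℤ → ℂ := fun k ↦ qPoch q ((n : ℤ) - k).toNat * qPoch q ((n : ℤ) + k + 1).toNat
  have hD : ∀ k, D (-k - 1) = D k := fun k ↦ by
    simp only [D]; rw [mul_comm]; congr 3 <;> ring
  set u : ℤ → ℂ := fun k ↦ q ^ n * ((-1) ^ k * q ^ a k / D k)
  set v : ℤ → ℂ := fun k ↦ (-1) ^ k * q ^ (a k + k) / D k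
  have hv : ∀ k, v (-k - 1) = -v k := fun k ↦ by
    simp only [v, hD, neg_one_zpow_neg_sub_one, ha_refl]
    ring_nf
  have edge : v (-n - 1) + u n = 0 := by
    simp only [hv, u, v, zpow_add_of_nonneg q (ha n) (Nat.cast_nonneg n), zpow_natCast]
    ring
  have step : ∀ k ∈ Icc (-(n : ℤ)) n, v k + u (-k - 1) =
      (-1) ^ k * q ^ (a k + k) /
        (qPoch q ((n : ℤ) - k).toNat * qPoch q ((n : ℤ) + k).toNat) := by
    intro k hk
    obtain ⟨m, hm⟩ : ∃ m : ℕ, (n : ℤ) + k = m :=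
      ⟨((n : ℤ) + k).toNat, by simp only [mem_Icc] at hk; omega⟩
    have hDk : D k = qPoch q ((n : ℤ) - k).toNat * (qPoch q m * (1 - q ^ (m + 1))) := by
      simp only [D, ← qPoch_succ, show ((n : ℤ) + k + 1).toNat = m + 1 by omega]
    have hpow : q ^ n * q ^ (a k + 2 * k + 1) = q ^ (a k + k) * q ^ (m + 1) := by
      rw [← zpow_natCast, ← zpow_natCast,
        ← zpow_add_of_nonneg q (Nat.cast_nonneg n) (ha_refl k ▸ ha _),
        ← zpow_add_of_nonneg q (hak k) (Nat.cast_nonneg _)]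
      congr 1; push_cast; omega
    have hvu : v k + u (-k - 1) =
        (-1) ^ k * (q ^ (a k + k) - q ^ n * q ^ (a k + 2 * k + 1)) / D k := by
      simp only [u, v, hD, ha_refl, neg_one_zpow_neg_sub_one]
      ring
    have hPk := hP ((n : ℤ) - k).toNat
    have hPm := hP m
    have hfactor : 1 - q ^ (m + 1) ≠ 0 := right_ne_zero_of_mul (qPoch_succ q m ▸ hP (m + 1))
    rw [hvu, hpow, hDk, hm, Int.toNat_natCast]
    field_simp
  calc _ = ∑ k ∈ Icc (-(n : ℤ) - 1) n, u k := mul_sum _ _ _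
    _ = ∑ k ∈ Icc (-(n : ℤ) - 1) n, u (-k - 1) := (sum_Icc_neg_sub_one _ u).symm
    _ = ∑ k ∈ Icc (-(n : ℤ) - 1) n, (v k + u (-k - 1)) := by
      rw [sum_add_distrib, sum_Icc_eq_zero_of_neg_sub_one _ v hv, zero_add]
    _ = _ := by
      rw [← insert_Icc_left_eq_Icc_sub_one (by omega), sum_insert (by simp),
        show -(-(n : ℤ) - 1) - 1 = n by ring, edge, zero_add]
      exact sum_congr rfl step

lemma Int.mul_add_one_nonneg (k : ℤ) : 0 ≤ k * (k + 1) := by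
  rcases le_or_gt 0 k with h | h <;> nlinarith

def qExponent (p : ℕ) (k : ℤ) : ℤ := ((2 * p + 1) * k ^ 2 + (2 * p - 1) * k) / 2

lemma qExponent_add_self (p : ℕ) (k : ℤ) :
    qExponent p k + k = ((2 * p + 1) * k ^ 2 + (2 * p + 1) * k) / 2 := by
  rw [qExponent, ← Int.add_mul_ediv_right _ _ two_ne_zero]
  ring_nf

lemma qExponent_neg_sub_one (p : ℕ) (k : ℤ) :
    qExponent p (-k - 1) = qExponent p k + 2 * k + 1 := by
  rw [qExponent, qExponent, add_assoc, ← Int.add_mul_ediv_right _ _ two_ne_zero]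
  ring_nf

lemma qExponent_nonneg (p : ℕ) (k : ℤ) : 0 ≤ qExponent p k := by
  have h := mul_nonneg (Nat.cast_nonneg p) (Int.mul_add_one_nonneg k)
  have := Int.mul_add_one_nonneg (k - 1)
  exact Int.ediv_nonneg (by nlinarith) zero_le_two

lemma qExponent_add_self_nonneg (p : ℕ) (k : ℤ) : 0 ≤ qExponent p k + k := by
  have h := mul_nonneg (by positivity : (0 : ℤ) ≤ 2 * p + 1) (Int.mul_add_one_nonneg k)
  exact qExponent_add_self p k ▸ Int.ediv_nonneg (by nlinarith) zero_le_two

theorem auxiliary2_general (q : ℂ) (hq : ‖q‖ < 1) (p : ℕ) (n : ℕ) :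
    q ^ n * ∑ k ∈ Finset.Icc (-(n : ℤ) - 1) n,
        (-1 : ℂ) ^ k * q ^ (((2 * p + 1) * k ^ 2 + (2 * p - 1) * k) / 2) /
          (qPoch q ((n : ℤ) - k).toNat * qPoch q ((n : ℤ) + k + 1).toNat) =
      ∑ k ∈ Finset.Icc (-(n : ℤ)) n,
        (-1 : ℂ) ^ k * q ^ (((2 * p + 1) * k ^ 2 + (2 * p + 1) * k) / 2) /
          (qPoch q ((n : ℤ) - k).toNat * qPoch q ((n : ℤ) + k).toNat) := by
  simp_rw [← qExponent_add_self]
  exact q_pow_mul_sum_eq_sum (qPoch_ne_zero hq) (qExponent_neg_sub_one p) (qExponent_nonneg p)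
    (qExponent_add_self_nonneg p) n

theorem auxiliary2 (q : ℂ) (hq : ‖q‖ < 1) (p : ℕ) (hp : 1 ≤ p) (n : ℕ) :
    q ^ n * ∑ k ∈ Finset.Icc (-(n : ℤ) - 1) n,
        (-1 : ℂ) ^ k * q ^ (((2 * p + 1) * k ^ 2 + (2 * p - 1) * k) / 2) /
          (qPoch q ((n : ℤ) - k).toNat * qPoch q ((n : ℤ) + k + 1).toNat) =
      ∑ k ∈ Finset.Icc (-(n : ℤ)) n,
        (-1 : ℂ) ^ k * q ^ (((2 * p + 1) * k ^ 2 + (2 * p + 1) * k) / 2) /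
          (qPoch q ((n : ℤ) - k).toNat * qPoch q ((n : ℤ) + k).toNat) :=
  auxiliary2_general q hq p n
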